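/- arXiv:1706.06090 — 8 statements merged into one kernel-verified Lean document; each statement's English description precedes it below -/
import Mathlib

section
/- Let n r : ℕ with 0 < r ≤ n, and let D : Fin n → Fin n → Fin n → ℂ be the hypermatrix with D i j k = 1 if i = j = k and (i : ℕ) < r, and D i j k = 0 otherwise (i.e. D = ∑_{t<r} Δ^{(t)}). Then D has BM rank 1: D is nonzero and there exist a : Fin n → Fin n → ℂ, b : Fin n → Fin n → ℂ, c : Fin n → Fin n → ℂ such that D i j k = a i k * b i j * c j k for all i, j, k. -/
/-- the hypermatrix D = ∑_{t<r} Δ^{(t)} (with 0 < r ≤ n) has BM rank 1. -/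
theorem bm_rank_one_of_partial_delta (n r : ℕ) (hr : 0 < r) (hrn : r ≤ n)
    (D : Fin n → Fin n → Fin n → ℂ)
    (hD : ∀ i j k, D i j k = if i = j ∧ j = k ∧ (i : ℕ) < r then 1 else 0) :
    D ≠ 0 ∧
    ∃ (a : Fin n → Fin n → ℂ) (b : Fin n → Fin n → ℂ) (c : Fin n → Fin n → ℂ),
      ∀ i j k, D i j k = a i k * b i j * c j k := by
  have hn : 0 < n := lt_of_lt_of_le hr hrn
  constructor
  · intro h
    have h0 : D ⟨0, hn⟩ ⟨0, hn⟩ ⟨0, hn⟩ = 0 := by rw [h]; rfl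
    rw [hD] at h0
    simp [hr] at h0
  · refine ⟨fun i k => if i = k ∧ (i : ℕ) < r then 1 else 0,
      fun i j => if i = j then 1 else 0,
      fun j k => if j = k then 1 else 0, fun i j k => ?_⟩
    rw [hD]
    by_cases h1 : i = j <;> by_cases h2 : j = k <;> by_cases h3 : (i : ℕ) < r <;>
      simp_all
end

section
/- Let m n p ℓ : ℕ, let X : Fin m → Fin ℓ → Fin p → ℂ, Y : Fin m → Fin n → Fin ℓ → ℂ, Z : Fin ℓ → Fin n → Fin p → ℂ, let τ : Fin ℓ and let u_t : Fin m → ℂ, v_t : Fin n → ℂ be vectors for each t ≠ τ. Suppose that for all i : Fin m, j : Fin n, k : Fin p: X i τ k * Y i j τ * Z τ j k = ∑_{t ≠ τ} ( u_t i * X i τ k * Y i j t * Z τ j k * v_t j + u_t i * X i τ k * Y i j t * Z t j k + X i t k * Y i j t * Z τ j k * v_t j ). Then Prod(X,Y,Z) has BM rank at most ℓ − 1: there exist families a_t : Fin m → Fin p → ℂ, b_t : Fin m → Fin n → ℂ, c_t : Fin n → Fin p → ℂ (t : Fin (ℓ−1)) with Prod(X,Y,Z) i j k = ∑_{t : Fin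 (ℓ−1)} a_t i k * b_t i j * c_t j k for all i, j, k. -/
/-- Theorem 5 of the paper: an outer-product reduction criterion implies that
the BM product `Prod(X,Y,Z)` has BM rank at most `ℓ - 1`. -/
theorem bm_rank_le_of_outer_product_reduction (m n p ℓ : ℕ)
    (X : Fin m → Fin ℓ → Fin p → ℂ) (Y : Fin m → Fin n → Fin ℓ → ℂ)
    (Z : Fin ℓ → Fin n → Fin p → ℂ) (τ : Fin ℓ)
    (u : Fin ℓ → Fin m → ℂ) (v : Fin ℓ → Fin n → ℂ)
    (h : ∀ (i : Fin m) (j : Fin n) (k : Fin p),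
      X i τ k * Y i j τ * Z τ j k =
        ∑ t ∈ Finset.univ.erase τ,
          (u t i * X i τ k * Y i j t * Z τ j k * v t j +
           u t i * X i τ k * Y i j t * Z t j k +
           X i t k * Y i j t * Z τ j k * v t j)) :
    ∃ (a : Fin (ℓ - 1) → Fin m → Fin p → ℂ) (b : Fin (ℓ - 1) → Fin m → Fin n → ℂ)
      (c : Fin (ℓ - 1) → Fin n → Fin p → ℂ),
      ∀ i j k, (∑ t : Fin ℓ, X i t k * Y i j t * Z t j k) =
        ∑ t : Fin (ℓ - 1), a t i k * b t i j * c t j k := by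
  obtain ⟨l, rfl⟩ : ∃ l, ℓ = l + 1 := ⟨ℓ - 1, (Nat.succ_pred_eq_of_pos τ.pos).symm⟩
  refine ⟨fun t i k => u (τ.succAbove t) i * X i τ k + X i (τ.succAbove t) k,
    fun t i j => Y i j (τ.succAbove t),
    fun t j k => Z τ j k * v (τ.succAbove t) j + Z (τ.succAbove t) j k, ?_⟩
  intro i j k
  have herase : ∀ f : Fin (l + 1) → ℂ,
      ∑ t ∈ Finset.univ.erase τ, f t = ∑ t : Fin l, f (τ.succAbove t) := by
    intro f
    have h1 := Finset.add_sum_erase Finset.univ f (Finset.mem_univ τ)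
    have h2 := Fin.sum_univ_succAbove f τ
    rw [h2] at h1
    exact add_left_cancel h1
  rw [Fin.sum_univ_succAbove (fun t => X i t k * Y i j t * Z t j k) τ, h i j k, herase,
    ← Finset.sum_add_distrib]
  simp only []
  apply Finset.sum_congr rfl
  intro t _
  ring
end

section
/- Let m n r : ℕ with r < m and r < n, and let B : Fin m → Fin n → Fin (r+1) → ℂ be a generic hypermatrix, i.e. the family of its entries (indexed by Fin m × Fin n × Fin (r+1)) is algebraically independent over ℚ. If the BM rank of B equals r + 1, then ((m : ℤ) + n) * ((r : ℤ) − 1) < ((m : ℤ) − 1) * ((n : ℤ) − 1). -/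
/-! Auxiliary combinatorial data for the explicit BM-rank-`r` decomposition.
For each row index `iv ≤ 2r-2` we choose a term `bmT`, a "double" coordinate `bmK`,
and an injection `bmS · : Fin r → Fin (r+1)` missing exactly `bmK`. -/

def bmT (r iv : ℕ) : ℕ := if iv < r then 0 else 1

def bmK (r iv : ℕ) : ℕ := if iv < r then iv + 1 else iv - r

def bmS (r iv t : ℕ) : ℕ :=
  if iv < r then (if t < iv + 1 then t else t + 1)
  else if t = 1 then r
  else if (if t = 0 then 0 else t - 1) < iv - r then (if t = 0 then 0 else t - 1)
  else (if t = 0 then 0 else t - 1) + 1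

def bmZ (r iv : ℕ) : ℕ := bmS r iv (bmT r iv)

lemma bmT_lt (r iv : ℕ) (hr : 2 ≤ r) : bmT r iv < r := by
  unfold bmT; split_ifs <;> omega

lemma bmK_le (r iv : ℕ) (hr : 2 ≤ r) (hiv : iv ≤ 2 * r - 2) : bmK r iv ≤ r := by
  unfold bmK; split_ifs <;> omega

lemma bmS_le (r iv t : ℕ) (hr : 2 ≤ r) (hiv : iv ≤ 2 * r - 2) (ht : t < r) :
    bmS r iv t ≤ r := by
  unfold bmS; split_ifs <;> omega

lemma bmS_inj (r iv t t' : ℕ) (hr : 2 ≤ r) (ht : t < r) (ht' : t' < r)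
    (h : bmS r iv t = bmS r iv t') : t = t' := by
  unfold bmS at h; split_ifs at h <;> (try contradiction) <;> omega

lemma bmS_ne_K (r iv t : ℕ) (hr : 2 ≤ r) (hiv : iv ≤ 2 * r - 2) (ht : t < r) :
    bmS r iv t ≠ bmK r iv := by
  unfold bmS bmK; split_ifs <;> (try contradiction) <;> omega

lemma bmcover (r iv k : ℕ) (hr : 2 ≤ r) (hiv : iv ≤ 2 * r - 2) (hk : k ≤ r) :
    k = bmK r iv ∨ ∃ t, t < r ∧ bmS r iv t = k := by
  unfold bmK bmS
  by_cases h1 : iv < r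
  · by_cases hkK : k = iv + 1
    · left; simp [h1, hkK]
    · right
      by_cases hlt : k < iv + 1
      · exact ⟨k, by omega, by split_ifs <;> (try contradiction) <;> omega⟩
      · exact ⟨k - 1, by omega, by split_ifs <;> (try contradiction) <;> omega⟩
  · by_cases hkK : k = iv - r
    · left; simp [h1, hkK]
    · right
      by_cases hkr : k = r
      · exact ⟨1, by omega, by split_ifs <;> (try contradiction) <;> omega⟩
      · by_cases hke : k < iv - r
        · by_cases hk0 : k = 0
          · exact ⟨0, by omega, by split_ifs <;> (try contradiction) <;> omega⟩
          · exact ⟨k + 1, by omega, by split_ifs <;> (try contradiction) <;> omega⟩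
        · by_cases hv0 : k - 1 = 0
          · exact ⟨0, by omega, by split_ifs <;> (try contradiction) <;> omega⟩
          · exact ⟨k, by omega, by split_ifs <;> (try contradiction) <;> omega⟩

lemma bmuniq (r iv iv' : ℕ) (hr : 2 ≤ r) (hiv : iv ≤ 2 * r - 2) (hiv' : iv' ≤ 2 * r - 2)
    (hT : bmT r iv = bmT r iv') (hK : bmK r iv = bmK r iv') : iv = iv' := by
  unfold bmT at hT; unfold bmK at hK; split_ifs at hT hK <;> omega

lemma bmZ_eq (r iv : ℕ) : bmZ r iv = if iv < r then 0 else r := by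
  by_cases h : iv < r <;> unfold bmZ bmT bmS <;> simp [h]

lemma bmK_ne_Z (r iv iv' : ℕ) (hr : 2 ≤ r) (hiv : iv ≤ 2 * r - 2) (hiv' : iv' ≤ 2 * r - 2)
    (hT : bmT r iv = bmT r iv') : bmK r iv ≠ bmZ r iv' := by
  rw [bmZ_eq]
  unfold bmT at hT; unfold bmK
  split_ifs at hT ⊢ <;> (try contradiction) <;> omega

/-- The core construction: any `M × N × (r+1)` hypermatrix with nonzero entries has
BM rank at most `r`, provided `2 ≤ r` and `M ≤ 2r - 1`. -/
lemma bm_core (r M N : ℕ) (hr : 2 ≤ r) (hM : M ≤ 2 * r - 1)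
    (D : Fin M → Fin N → Fin (r + 1) → ℂ) (hD : ∀ i j k, D i j k ≠ 0) :
    ∃ (a : Fin r → Fin M → Fin (r + 1) → ℂ) (b : Fin r → Fin M → Fin N → ℂ)
      (c : Fin r → Fin N → Fin (r + 1) → ℂ),
      ∀ i j k, D i j k = ∑ t : Fin r, a t i k * b t i j * c t j k := by
  classical
  have hiv : ∀ i : Fin M, (i : ℕ) ≤ 2 * r - 2 := fun i => by have := i.isLt; omega
  set T : Fin M → Fin r := fun i => ⟨bmT r i, bmT_lt r i hr⟩ with hT
  set Kf : Fin M → Fin (r + 1) := fun i => ⟨bmK r i, by have := bmK_le r i hr (hiv i); omega⟩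
    with hKf
  set Sf : Fin M → Fin r → Fin (r + 1) :=
    fun i t => ⟨bmS r i t, by have := bmS_le r i t hr (hiv i) t.isLt; omega⟩ with hSf
  set c : Fin r → Fin N → Fin (r + 1) → ℂ := fun t j k =>
    if h : ∃ i : Fin M, T i = t ∧ Kf i = k then
      D h.choose j k / D h.choose j (Sf h.choose (T h.choose)) else 1 with hc
  have hc0 : ∀ t j k, c t j k ≠ 0 := by
    intro t j k
    rw [hc]
    dsimp only
    split_ifs with h
    · exact div_ne_zero (hD _ _ _) (hD _ _ _)
    · exact one_ne_zero
  set b : Fin r → Fin M → Fin N → ℂ := fun t i j => D i j (Sf i t) / c t j (Sf i t) with hb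
  set a : Fin r → Fin M → Fin (r + 1) → ℂ := fun t i k =>
    if (k = Sf i t ∨ (t = T i ∧ k = Kf i)) then 1 else 0 with ha
  refine ⟨a, b, c, ?_⟩
  intro i j k
  by_cases hkK : k = Kf i
  · -- `k` is the second ("double") coordinate of term `T i` in row `i`
    rw [Finset.sum_eq_single (T i)]
    · have ha1 : a (T i) i k = 1 := by rw [ha]; exact if_pos (Or.inr ⟨rfl, hkK⟩)
      have hex : ∃ i' : Fin M, T i' = T i ∧ Kf i' = k := ⟨i, rfl, hkK.symm⟩
      have hch : hex.choose = i := by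
        have hs := hex.choose_spec
        apply Fin.ext
        refine bmuniq r _ _ hr (hiv _) (hiv _) ?_ ?_
        · have := congrArg Fin.val hs.1; simpa [hT] using this
        · have h1 := congrArg Fin.val hs.2
          have h2 := congrArg Fin.val hkK
          simp only [hKf] at h1 ⊢
          rw [h1, h2]
      have hcv : c (T i) j k = D i j k / D i j (Sf i (T i)) := by
        rw [hc]
        dsimp only
        rw [dif_pos hex, hch]
      have hne : ¬ ∃ i' : Fin M, T i' = T i ∧ Kf i' = Sf i (T i) := by
        rintro ⟨i', hti', hki'⟩
        refine bmK_ne_Z r i' i hr (hiv _) (hiv _) ?_ ?_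
        · have := congrArg Fin.val hti'; simpa [hT] using this
        · have := congrArg Fin.val hki'
          simpa [hKf, hSf, hT, bmZ] using this
      have hcz : c (T i) j (Sf i (T i)) = 1 := by
        rw [hc]; dsimp only; rw [dif_neg hne]
      have hbv : b (T i) i j = D i j (Sf i (T i)) := by
        rw [hb]; dsimp only; rw [hcz, div_one]
      rw [ha1, hbv, hcv, one_mul, mul_comm, div_mul_cancel₀ _ (hD _ _ _)]
    · intro t _ htne
      have ha0 : a t i k = 0 := by
        rw [ha]
        refine if_neg ?_
        rintro (h1 | ⟨h2, _⟩)
        · -- k = Sf i t contradicts k = Kf i via bmS_ne_K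
          have hv1 := congrArg Fin.val h1
          have hv2 := congrArg Fin.val hkK
          simp only [hSf, hKf] at hv1 hv2
          exact bmS_ne_K r i t hr (hiv i) t.isLt (by rw [← hv1, hv2])
        · exact htne h2
      rw [ha0, zero_mul, zero_mul]
    · intro h; exact absurd (Finset.mem_univ _) h
  · -- `k` is a "single" coordinate: it is `Sf i τ` for a unique `τ`
    have hkk : (k : ℕ) ≤ r := by have := k.isLt; omega
    have hcov := bmcover r i k hr (hiv i) hkk
    have hx : ∃ t, t < r ∧ bmS r i t = (k : ℕ) := by
      rcases hcov with h | h
      · exact absurd (Fin.ext (h.trans rfl) : k = Kf i) hkK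
      · exact h
    obtain ⟨tv, htv, hts⟩ := hx
    set τ : Fin r := ⟨tv, htv⟩ with hτ
    have hkS : k = Sf i τ := by apply Fin.ext; simp [hSf, hτ, hts]
    rw [Finset.sum_eq_single τ]
    · have ha1 : a τ i k = 1 := by rw [ha]; exact if_pos (Or.inl hkS)
      rw [ha1, one_mul, hb]
      dsimp only
      rw [← hkS]
      exact (div_mul_cancel₀ _ (hc0 τ j k)).symm
    · intro t _ htne
      have ha0 : a t i k = 0 := by
        rw [ha]
        refine if_neg ?_
        rintro (h1 | ⟨_, h2⟩)
        · -- k = Sf i t and k = Sf i τ with t ≠ τ contradicts injectivity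
          have hv1 := congrArg Fin.val h1
          simp only [hSf] at hv1
          have : (t : ℕ) = tv := bmS_inj r i t tv hr t.isLt htv (by rw [← hv1, hts])
          exact htne (Fin.ext this)
        · exact hkK h2
      rw [ha0, zero_mul, zero_mul]
    · intro h; exact absurd (Finset.mem_univ _) h

/-- Theorem 6 of the paper: if a generic
`B : Fin m → Fin n → Fin (r+1) → ℂ` (entries algebraically independent over ℚ) has BM rank
equal to `r + 1`, then `(m + n)(r - 1) < (m - 1)(n - 1)` (as integers). -/
theorem bm_rank_generic_inequality (m n r : ℕ) (hm : r < m) (hn : r < n)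
    (B : Fin m → Fin n → Fin (r + 1) → ℂ)
    (hgen : AlgebraicIndependent ℚ
      (fun q : Fin m × Fin n × Fin (r + 1) => B q.1 q.2.1 q.2.2))
    (hrank :
      (∃ (a : Fin (r + 1) → Fin m → Fin (r + 1) → ℂ)
         (b : Fin (r + 1) → Fin m → Fin n → ℂ)
         (c : Fin (r + 1) → Fin n → Fin (r + 1) → ℂ),
         ∀ i j k, B i j k = ∑ t : Fin (r + 1), a t i k * b t i j * c t j k) ∧
      (∀ s : ℕ, s < r + 1 →
        ¬ ∃ (a : Fin s → Fin m → Fin (r + 1) → ℂ) (b : Fin s → Fin m → Fin n → ℂ)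
            (c : Fin s → Fin n → Fin (r + 1) → ℂ),
            ∀ i j k, B i j k = ∑ t : Fin s, a t i k * b t i j * c t j k)) :
    ((m : ℤ) + n) * ((r : ℤ) - 1) < ((m : ℤ) - 1) * ((n : ℤ) - 1) := by
  by_contra hlt
  push_neg at hlt
  -- all entries of B are nonzero
  have hB0 : ∀ i j k, B i j k ≠ 0 := by
    intro i j k h
    have h0 : (MvPolynomial.aeval (R := ℚ) fun q : Fin m × Fin n × Fin (r + 1) => B q.1 q.2.1 q.2.2)
        (MvPolynomial.X (i, j, k)) = 0 := by
      simpa using h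
    have := algebraicIndependent_iff.mp hgen _ h0
    exact MvPolynomial.X_ne_zero _ this
  have hm1 : (1 : ℤ) ≤ (m : ℤ) := by exact_mod_cast Nat.one_le_iff_ne_zero.mpr (by omega)
  have hn1 : (1 : ℤ) ≤ (n : ℤ) := by exact_mod_cast Nat.one_le_iff_ne_zero.mpr (by omega)
  have hr2 : 2 ≤ r := by
    by_contra h2
    push_neg at h2
    interval_cases r
    · push_cast at hlt
      nlinarith [mul_nonneg (by linarith : (0:ℤ) ≤ (m:ℤ) - 1) (by linarith : (0:ℤ) ≤ (n:ℤ) - 1)]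
    · have hm2 : (2 : ℤ) ≤ (m : ℤ) := by exact_mod_cast hm
      have hn2 : (2 : ℤ) ≤ (n : ℤ) := by exact_mod_cast hn
      push_cast at hlt
      nlinarith [mul_pos (by linarith : (0:ℤ) < (m:ℤ) - 1) (by linarith : (0:ℤ) < (n:ℤ) - 1)]
  have hmn : m ≤ 2 * r - 1 ∨ n ≤ 2 * r - 1 := by
    by_contra h
    push_neg at h
    have hm2 : (2 * r : ℤ) ≤ (m : ℤ) := by exact_mod_cast (by omega : 2 * r ≤ m)
    have hn2 : (2 * r : ℤ) ≤ (n : ℤ) := by exact_mod_cast (by omega : 2 * r ≤ n)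
    have hr1 : (2 : ℤ) ≤ (r : ℤ) := by exact_mod_cast hr2
    nlinarith
  rcases hmn with hM | hN
  · obtain ⟨a, b, c, hd⟩ := bm_core r m n hr2 hM B hB0
    exact hrank.2 r (Nat.lt_succ_self r) ⟨a, b, c, hd⟩
  · obtain ⟨a, b, c, hd⟩ := bm_core r n m hr2 hN (fun j i k => B i j k)
      (fun j i k => hB0 i j k)
    refine hrank.2 r (Nat.lt_succ_self r)
      ⟨fun t i k => c t i k, fun t i j => b t j i, fun t j k => a t j k, ?_⟩
    intro i j k
    rw [hd j i k]
    exact Finset.sum_congr rfl fun t _ => by ring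
end

section
/- Let n : ℕ and let B : Fin n → Fin n → Fin n → ℂ be a generic hypermatrix, i.e. the family of its entries (indexed by Fin n × Fin n × Fin n) is algebraically independent over ℚ. If n = 2 then the BM rank of B is at most 2, and if n > 2 then the BM rank of B is at most n − 1 (i.e. B can be written as a sum of n − 1 BM outer products). -/
open MvPolynomial in
lemma aux_ne {ι : Type*} {x : ι → ℂ} (h : AlgebraicIndependent ℚ x) (q : ι) : x q ≠ 0 := by
  intro h0
  have hinj : Function.Injective (aeval x : MvPolynomial ι ℚ →ₐ[ℚ] ℂ) := h
  have h1 : (aeval x : MvPolynomial ι ℚ →ₐ[ℚ] ℂ) (X q) = (aeval x : MvPolynomial ι ℚ →ₐ[ℚ] ℂ) 0 := by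
    simp [h0]
  exact MvPolynomial.X_ne_zero q (hinj h1)

open MvPolynomial in
lemma aux_mul_ne {ι : Type*} {x : ι → ℂ} (h : AlgebraicIndependent ℚ x)
    {q1 q2 q3 q4 : ι} (h12 : q1 ≠ q2) (h13 : q1 ≠ q3) (h14 : q1 ≠ q4) :
    x q1 * x q2 - x q3 * x q4 ≠ 0 := by
  classical
  intro h0
  have hinj : Function.Injective (aeval x : MvPolynomial ι ℚ →ₐ[ℚ] ℂ) := h
  set p : MvPolynomial ι ℚ := X q1 * X q2 - X q3 * X q4 with hp
  have hpz : p = 0 := by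
    apply hinj
    simp only [hp, map_sub, map_mul, aeval_X, map_zero]
    exact h0
  have hc := congrArg (coeff (Finsupp.single q1 1 + Finsupp.single q2 1)) hpz
  have e1 : (X q1 * X q2 : MvPolynomial ι ℚ)
      = monomial (Finsupp.single q1 1 + Finsupp.single q2 1) 1 := by
    rw [X, X, monomial_mul, one_mul]
  have e2 : (X q3 * X q4 : MvPolynomial ι ℚ)
      = monomial (Finsupp.single q3 1 + Finsupp.single q4 1) 1 := by
    rw [X, X, monomial_mul, one_mul]
  have hne : (Finsupp.single q3 1 + Finsupp.single q4 1 : ι →₀ ℕ)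
      ≠ Finsupp.single q1 1 + Finsupp.single q2 1 := by
    intro he
    have := DFunLike.congr_fun he q1
    simp [Finsupp.single_apply, (Ne.symm h13), (Ne.symm h14), h12.symm, Ne.symm h12] at this

  rw [hp, coeff_sub, e1, e2, coeff_monomial, coeff_monomial, if_pos rfl, if_neg hne,
    coeff_zero] at hc
  norm_num at hc

lemma bm_key (n : ℕ) (h : 2 < n) (B : Fin n → Fin n → Fin n → ℂ) (m : Fin n → ℂ)
    (J o0 o1 : Fin n) (hJ : (J : ℕ) = n - 1) (h0 : (o0 : ℕ) = 0) (h1 : (o1 : ℕ) = 1)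
    (E : Fin (n - 1) → Fin n) (hE : ∀ t, (E t : ℕ) = (t : ℕ))
    (A : Fin (n - 1) → Fin n → Fin n → ℂ)
    (hA : ∀ t i k, A t i k = B i (E t) k + (if (t : ℕ) = 1 then m i * B i o0 k else 0))
    (b : Fin (n - 1) → Fin n → Fin n → ℂ)
    (hb : ∀ t i j, b t i j = (if j = E t then 1 else 0)
      + (if (t : ℕ) = 0 ∧ j = o1 then -(m i) else 0)
      + (if j = J then B i J (E t) / A t i (E t) else 0))
    (c : Fin (n - 1) → Fin n → Fin n → ℂ)
    (hc : ∀ t j k, c t j k = if j = J then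
      ((if k = E t then 1 else 0) + (if (t : ℕ) = 1 ∧ k = J then 1 else 0)) else 1)
    (hm : ∀ i, m i * (B i J J * B i o0 o1 - B i J o1 * B i o0 J)
      = B i J o1 * B i o1 J - B i J J * B i o1 o1)
    (hA1 : ∀ i, B i o1 o1 + m i * B i o0 o1 ≠ 0)
    (hBkk : ∀ i k, B i k k ≠ 0) :
    ∀ i j k, B i j k = ∑ t : Fin (n - 1), A t i k * b t i j * c t j k := by
  have hn1 : 1 < n - 1 := by omega
  have hn0 : 0 < n - 1 := by omega
  set t1 : Fin (n - 1) := ⟨1, hn1⟩ with ht1def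
  set t0 : Fin (n - 1) := ⟨0, hn0⟩ with ht0def
  have ht1v : (t1 : ℕ) = 1 := rfl
  have ht0v : (t0 : ℕ) = 0 := rfl
  have hEt1 : E t1 = o1 := Fin.ext (by rw [hE, h1, ht1v])
  have hEt0 : E t0 = o0 := Fin.ext (by rw [hE, h0, ht0v])
  have hJE : ∀ t : Fin (n - 1), J ≠ E t := by
    intro t hq
    have hv := congrArg Fin.val hq
    rw [hJ, hE] at hv
    have := t.2; omega
  have hJo1 : J ≠ o1 := by
    intro hq; have hv := congrArg Fin.val hq; rw [hJ, h1] at hv; omega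
  have ho1J : o1 ≠ J := fun hq => hJo1 hq.symm
  intro i j k
  by_cases hj : j = J
  · rw [hj]
    by_cases hk : k = J
    · rw [hk]
      have hstep : ∀ t : Fin (n - 1), A t i J * b t i J * c t J J
          = if t = t1 then A t i J * (B i J (E t) / A t i (E t)) else 0 := by
        intro t
        rw [hb, hc, if_neg (hJE t),
          if_neg (show ¬((t : ℕ) = 0 ∧ J = o1) from fun hq => hJo1 hq.2),
          if_pos (rfl : (J : Fin n) = J), if_pos (rfl : (J : Fin n) = J)]
        by_cases e1 : t = t1
        · have hcond : ((t : ℕ) = 1 ∧ (J : Fin n) = J) := ⟨by rw [e1], rfl⟩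
          rw [if_pos hcond, if_pos e1]; ring
        · rw [if_neg (show ¬((t : ℕ) = 1 ∧ (J : Fin n) = J) from
            fun hq => e1 (Fin.ext (by rw [hq.1, ht1v]))), if_neg e1]; ring
      rw [Finset.sum_congr rfl (fun t _ => hstep t), Finset.sum_ite_eq' Finset.univ t1,
        if_pos (Finset.mem_univ _), hA t1 i J, hA t1 i (E t1), hEt1,
        if_pos ht1v, if_pos ht1v, ← mul_div_assoc, eq_div_iff (hA1 i)]
      linear_combination hm i
    · have hkJ := k.2
      have hklt : (k : ℕ) < n - 1 := by
        rcases Nat.lt_or_ge (k : ℕ) (n - 1) with hlt | hge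
        · exact hlt
        · exact absurd (Fin.ext (by rw [hJ]; omega : (k : ℕ) = (J : ℕ))) hk
      set tk : Fin (n - 1) := ⟨(k : ℕ), hklt⟩ with htkdef
      have htkv : (tk : ℕ) = (k : ℕ) := rfl
      have hEtk : E tk = k := Fin.ext (by rw [hE, htkv])
      have hstep : ∀ t : Fin (n - 1), A t i k * b t i J * c t J k
          = if t = tk then A t i k * (B i J (E t) / A t i (E t)) else 0 := by
        intro t
        rw [hb, hc, if_neg (hJE t),
          if_neg (show ¬((t : ℕ) = 0 ∧ J = o1) from fun hq => hJo1 hq.2),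
          if_pos (rfl : (J : Fin n) = J), if_pos (rfl : (J : Fin n) = J),
          if_neg (show ¬((t : ℕ) = 1 ∧ k = J) from fun hq => hk hq.2)]
        by_cases e1 : t = tk
        · rw [if_pos (show k = E t from Fin.ext (by rw [hE, e1, htkv])), if_pos e1]; ring
        · rw [if_neg (show ¬(k = E t) from
            fun hq => e1 (Fin.ext (by rw [← hE t, ← hq, htkv]))), if_neg e1]; ring
      have hAne : A tk i k ≠ 0 := by
        rw [hA tk i k, hEtk]
        by_cases hk1 : k = o1
        · rw [if_pos (show (tk : ℕ) = 1 by rw [htkv, hk1, h1]), hk1]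
          exact hA1 i
        · rw [if_neg (show ¬((tk : ℕ) = 1) from
            fun hq => hk1 (Fin.ext (by rw [h1, ← htkv, hq]))), add_zero]
          exact hBkk i k
      rw [Finset.sum_congr rfl (fun t _ => hstep t), Finset.sum_ite_eq' Finset.univ tk,
        if_pos (Finset.mem_univ _), hEtk, ← mul_div_assoc, mul_div_cancel_left₀ _ hAne]
  · by_cases hj1 : j = o1
    · rw [hj1]
      have hstep : ∀ t : Fin (n - 1), A t i k * b t i o1 * c t o1 k
          = (if t = t1 then A t i k else 0) + (if t = t0 then -(m i) * A t i k else 0) := by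
        intro t
        rw [hb, hc, if_neg ho1J, if_neg ho1J, mul_one, add_zero]
        by_cases e1 : t = t1
        · have hP : (o1 : Fin n) = E t := Fin.ext (by rw [hE, e1, ht1v, h1])
          have hQ : ¬((t : ℕ) = 0 ∧ (o1 : Fin n) = o1) := by
            intro hq
            have hv := hq.1
            rw [e1, ht1v] at hv
            exact one_ne_zero hv
          have hR : t ≠ t0 := by
            rw [e1]
            intro hq
            have hv := congrArg Fin.val hq
            rw [ht1v, ht0v] at hv
            exact one_ne_zero hv
          rw [if_pos hP, if_neg hQ, if_pos e1, if_neg hR]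
          ring
        · by_cases e2 : t = t0
          · have hP : ¬((o1 : Fin n) = E t) := by
              intro hq
              have hv := congrArg Fin.val hq
              rw [h1, hE, e2, ht0v] at hv
              exact one_ne_zero hv
            have hQ : ((t : ℕ) = 0 ∧ (o1 : Fin n) = o1) := ⟨by rw [e2, ht0v], rfl⟩
            rw [if_neg hP, if_pos hQ, if_neg e1, if_pos e2]
            ring
          · have hP : ¬((o1 : Fin n) = E t) := by
              intro hq
              exact e1 (Fin.ext (by rw [← hE t, ← hq, ht1v, h1]))
            have hQ : ¬((t : ℕ) = 0 ∧ (o1 : Fin n) = o1) :=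
              fun hq => e2 (Fin.ext (by rw [hq.1, ht0v]))
            rw [if_neg hP, if_neg hQ, if_neg e1, if_neg e2]
            ring
      rw [Finset.sum_congr rfl (fun t _ => hstep t), Finset.sum_add_distrib,
        Finset.sum_ite_eq' Finset.univ t1, Finset.sum_ite_eq' Finset.univ t0,
        if_pos (Finset.mem_univ _), if_pos (Finset.mem_univ _),
        hA t1 i k, hA t0 i k, hEt1, hEt0, if_pos ht1v,
        if_neg (show ¬((t0 : ℕ) = 1) from by rw [ht0v]; omega)]
      ring
    · have hjJ := j.2
      have hjlt : (j : ℕ) < n - 1 := by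
        rcases Nat.lt_or_ge (j : ℕ) (n - 1) with hlt | hge
        · exact hlt
        · exact absurd (Fin.ext (by rw [hJ]; omega : (j : ℕ) = (J : ℕ))) hj
      set tj : Fin (n - 1) := ⟨(j : ℕ), hjlt⟩ with htjdef
      have htjv : (tj : ℕ) = (j : ℕ) := rfl
      have hEtj : E tj = j := Fin.ext (by rw [hE, htjv])
      have hstep : ∀ t : Fin (n - 1), A t i k * b t i j * c t j k
          = if t = tj then A t i k else 0 := by
        intro t
        rw [hb, hc, if_neg hj, if_neg hj, mul_one, add_zero,
          if_neg (show ¬((t : ℕ) = 0 ∧ j = o1) from fun hq => hj1 hq.2), add_zero]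
        by_cases e1 : t = tj
        · rw [if_pos (show j = E t from Fin.ext (by rw [hE, e1, htjv])), if_pos e1, mul_one]
        · rw [if_neg (show ¬(j = E t) from
            fun hq => e1 (Fin.ext (by rw [← hE t, ← hq, htjv]))), if_neg e1, mul_zero]
      rw [Finset.sum_congr rfl (fun t _ => hstep t), Finset.sum_ite_eq' Finset.univ tj,
        if_pos (Finset.mem_univ _), hA tj i k, hEtj,
        if_neg (show ¬((tj : ℕ) = 1) from
          fun hq => hj1 (Fin.ext (by rw [h1, ← htjv, hq]))), add_zero]

/-- Theorem 7 of the paper: the BM rank of a generic `n × n × n` hypermatrix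
is at most `2` if `n = 2` and at most `n - 1` if `n > 2`. -/
theorem bm_rank_generic_upper_bound (n : ℕ) (B : Fin n → Fin n → Fin n → ℂ)
    (hgen : AlgebraicIndependent ℚ
      (fun q : Fin n × Fin n × Fin n => B q.1 q.2.1 q.2.2)) :
    (n = 2 →
      ∃ (a : Fin 2 → Fin n → Fin n → ℂ) (b : Fin 2 → Fin n → Fin n → ℂ)
        (c : Fin 2 → Fin n → Fin n → ℂ),
        ∀ i j k, B i j k = ∑ t : Fin 2, a t i k * b t i j * c t j k) ∧
    (2 < n →
      ∃ (a : Fin (n - 1) → Fin n → Fin n → ℂ) (b : Fin (n - 1) → Fin n → Fin n → ℂ)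
        (c : Fin (n - 1) → Fin n → Fin n → ℂ),
        ∀ i j k, B i j k = ∑ t : Fin (n - 1), a t i k * b t i j * c t j k) := by
  constructor
  · intro h2
    subst h2
    refine ⟨fun t i k => B i t k, fun t i j => if j = t then 1 else 0, fun _ _ _ => 1, ?_⟩
    intro i j k
    fin_cases j <;> simp [Fin.sum_univ_two]
  · intro h
    set J : Fin n := ⟨n - 1, by omega⟩ with hJdef
    set o0 : Fin n := ⟨0, by omega⟩ with ho0def
    set o1 : Fin n := ⟨1, by omega⟩ with ho1def
    have hJv : (J : ℕ) = n - 1 := rfl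
    have h0v : (o0 : ℕ) = 0 := rfl
    have h1v : (o1 : ℕ) = 1 := rfl
    set E : Fin (n - 1) → Fin n := fun t => ⟨(t : ℕ), by have := t.2; omega⟩ with hEdef
    have hEv : ∀ t, (E t : ℕ) = (t : ℕ) := fun t => rfl
    -- basic index inequalities
    have hJ0 : J ≠ o0 := by
      intro hq; have hv := congrArg Fin.val hq; rw [hJv, h0v] at hv; omega
    have hJ1 : J ≠ o1 := by
      intro hq; have hv := congrArg Fin.val hq; rw [hJv, h1v] at hv; omega
    have h10 : o1 ≠ o0 := by
      intro hq; have hv := congrArg Fin.val hq; rw [h1v, h0v] at hv; omega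
    have h1J : o1 ≠ J := fun hq => hJ1 hq.symm
    -- nonvanishing facts from genericity
    have hz : ∀ i j k, B i j k ≠ 0 := fun i j k => aux_ne hgen (i, j, k)
    have hD : ∀ i, B i J J * B i o0 o1 - B i J o1 * B i o0 J ≠ 0 := by
      intro i
      exact aux_mul_ne hgen (q1 := (i, J, J)) (q2 := (i, o0, o1))
        (q3 := (i, J, o1)) (q4 := (i, o0, J))
        (fun hq => hJ0 (congrArg (fun p : Fin n × Fin n × Fin n => p.2.1) hq))
        (fun hq => hJ1 (congrArg (fun p : Fin n × Fin n × Fin n => p.2.2) hq))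
        (fun hq => hJ0 (congrArg (fun p : Fin n × Fin n × Fin n => p.2.1) hq))
    have hE2 : ∀ i, B i o1 J * B i o0 o1 - B i o1 o1 * B i o0 J ≠ 0 := by
      intro i
      exact aux_mul_ne hgen (q1 := (i, o1, J)) (q2 := (i, o0, o1))
        (q3 := (i, o1, o1)) (q4 := (i, o0, J))
        (fun hq => h10 (congrArg (fun p : Fin n × Fin n × Fin n => p.2.1) hq))
        (fun hq => hJ1 (congrArg (fun p : Fin n × Fin n × Fin n => p.2.2) hq))
        (fun hq => h10 (congrArg (fun p : Fin n × Fin n × Fin n => p.2.1) hq))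
    obtain ⟨m, hm⟩ : ∃ m : Fin n → ℂ, ∀ i,
        m i * (B i J J * B i o0 o1 - B i J o1 * B i o0 J)
          = B i J o1 * B i o1 J - B i J J * B i o1 o1 :=
      ⟨fun i => (B i J o1 * B i o1 J - B i J J * B i o1 o1)
          / (B i J J * B i o0 o1 - B i J o1 * B i o0 J),
        fun i => div_mul_cancel₀ _ (hD i)⟩
    have hA1 : ∀ i, B i o1 o1 + m i * B i o0 o1 ≠ 0 := by
      intro i hcontra
      have key : (B i o1 o1 + m i * B i o0 o1)
            * (B i J J * B i o0 o1 - B i J o1 * B i o0 J)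
          = B i J o1 * (B i o1 J * B i o0 o1 - B i o1 o1 * B i o0 J) := by
        linear_combination (B i o0 o1) * hm i
      rw [hcontra, zero_mul] at key
      exact (mul_ne_zero (hz i J o1) (hE2 i)) key.symm
    have hBkk : ∀ i k, B i k k ≠ 0 := fun i k => aux_ne hgen (i, k, k)
    exact ⟨fun t i k => B i (E t) k + (if (t : ℕ) = 1 then m i * B i o0 k else 0),
      fun t i j => (if j = E t then 1 else 0)
        + (if (t : ℕ) = 0 ∧ j = o1 then -(m i) else 0)
        + (if j = J then B i J (E t)
            / (B i (E t) (E t) + (if (t : ℕ) = 1 then m i * B i o0 (E t) else 0)) else 0),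
      fun t j k => if j = J then
        ((if k = E t then 1 else 0) + (if (t : ℕ) = 1 ∧ k = J then 1 else 0)) else 1,
      bm_key n h B m J o0 o1 hJv h0v h1v E hEv
        (fun t i k => B i (E t) k + (if (t : ℕ) = 1 then m i * B i o0 k else 0))
        (fun t i k => rfl)
        _ (fun t i j => rfl) _ (fun t j k => rfl) hm hA1 hBkk⟩
end

section
/- Let m n p r : ℕ with r ≤ p, p ≤ m and p ≤ n, and let A : Fin m → Fin n → Fin p → ℂ. Suppose there exist an invertible pair (X₀, X₁) with X₀ : Fin m → Fin p → Fin p → ℂ, X₁ : Fin p → Fin n → Fin p → ℂ, and a set S ⊆ Fin p with |S| = r, such that all depth slices of Prod(X₀, A, X₁) outside S vanish: Prod(X₀, A, X₁) i j k = 0 for all i, j and all k ∉ S. Then A has BM rank at most r: there exist families a_t : Fin m → Fin p → ℂ, b_t : Fin m → Fin n → ℂ, c_t : Fin n → Fin p → ℂ (t : Fin r) with A i j k = ∑_{t : Fin r} a_t i k * b_t i j * c_t j k for all i, j, k. -/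
/-- The Bhattacharya–Mesner product of a conformable triple of third order hypermatrices. -/
noncomputable def bmProd {m n p ℓ : ℕ} (A : Fin m → Fin ℓ → Fin p → ℂ)
    (B : Fin m → Fin n → Fin ℓ → ℂ) (C : Fin ℓ → Fin n → Fin p → ℂ) :
    Fin m → Fin n → Fin p → ℂ :=
  fun i j k => ∑ t : Fin ℓ, A i t k * B i j t * C t j k

/-- rank–nullity, sufficiency: if an invertible pair maps all depth slices
of `A` outside a set `S` of cardinality `r` to zero, then the BM rank of `A` is at most `r`. -/
theorem bm_rank_le_of_nullity (m n p r : ℕ) (hr : r ≤ p) (hpm : p ≤ m) (hpn : p ≤ n)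
    (A : Fin m → Fin n → Fin p → ℂ)
    (h : ∃ (X₀ : Fin m → Fin p → Fin p → ℂ) (X₁ : Fin p → Fin n → Fin p → ℂ),
      (∃ (Y₀ : Fin m → Fin p → Fin p → ℂ) (Y₁ : Fin p → Fin n → Fin p → ℂ),
        ∀ Z : Fin m → Fin n → Fin p → ℂ, bmProd Y₀ (bmProd X₀ Z X₁) Y₁ = Z) ∧
      ∃ S : Finset (Fin p), S.card = r ∧
        ∀ (i : Fin m) (j : Fin n) (k : Fin p), k ∉ S → bmProd X₀ A X₁ i j k = 0) :
    ∃ (a : Fin r → Fin m → Fin p → ℂ) (b : Fin r → Fin m → Fin n → ℂ)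
      (c : Fin r → Fin n → Fin p → ℂ),
      ∀ i j k, A i j k = ∑ t : Fin r, a t i k * b t i j * c t j k := by
  obtain ⟨X₀, X₁, ⟨Y₀, Y₁, hinv⟩, S, hS, hz⟩ := h
  set B := bmProd X₀ A X₁ with hB
  let e : Fin r ≃o S := S.orderIsoOfFin hS
  refine ⟨fun t i k => Y₀ i (e t) k, fun t i j => B i j (e t),
    fun t j k => Y₁ (e t) j k, fun i j k => ?_⟩
  have hA : A i j k = ∑ t : Fin p, Y₀ i t k * B i j t * Y₁ t j k := by
    conv_lhs => rw [← hinv A]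
    rfl
  rw [hA, ← Finset.sum_subset (Finset.subset_univ S)
    (fun t _ ht => by rw [hz i j t ht]; ring)]
  rw [← Finset.sum_coe_sort S (fun t => Y₀ i t k * B i j t * Y₁ t j k)]
  exact (Equiv.sum_comp e.toEquiv _).symm
end

section
/- Let m n p : ℕ, let A, C : Fin m → Fin p → Fin p → ℂ and B, D : Fin p → Fin n → Fin p → ℂ. Then the following are equivalent: (1) Prod(C, Prod(A, X, B), D) = X for every X : Fin m → Fin n → Fin p → ℂ; (2) for all i : Fin m, j : Fin n, k s : Fin p, ∑_{t : Fin p} (C i t k * D t j k) * (A i s t * B s j t) equals 1 if k = s and 0 otherwise. -/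
/-- `(C, D)` is an outer inverse pair of `(A, B)` iff the flattened
coefficients satisfy the Kronecker-delta relations. -/
theorem bm_outer_inverse_iff (m n p : ℕ)
    (A C : Fin m → Fin p → Fin p → ℂ) (B D : Fin p → Fin n → Fin p → ℂ) :
    (∀ X : Fin m → Fin n → Fin p → ℂ, bmProd C (bmProd A X B) D = X) ↔
    (∀ (i : Fin m) (j : Fin n) (k s : Fin p),
      (∑ t : Fin p, (C i t k * D t j k) * (A i s t * B s j t)) =
        if k = s then 1 else 0) := by
  constructor
  · intro h i j k s
    have hh := congrFun (congrFun (congrFun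
      (h (fun _ _ s' => if s' = s then 1 else 0)) i) j) k
    simp only [bmProd] at hh
    have hin : ∀ t : Fin p,
        (∑ u : Fin p, A i u t * (if u = s then (1:ℂ) else 0) * B u j t)
          = A i s t * B s j t := by
      intro t
      simp [mul_ite, ite_mul, mul_zero, zero_mul, Finset.sum_ite_eq']
    rw [← hh]
    apply Finset.sum_congr rfl
    intro t _
    rw [hin t]
    ring
  · intro h
    intro X
    funext i j k
    simp only [bmProd]
    calc ∑ t : Fin p, C i t k * (∑ u : Fin p, A i u t * X i j u * B u j t) * D t j k
        = ∑ t : Fin p, ∑ u : Fin p,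
            (C i t k * D t j k) * (A i u t * B u j t) * X i j u := by
          apply Finset.sum_congr rfl
          intro t _
          rw [Finset.mul_sum, Finset.sum_mul]
          apply Finset.sum_congr rfl
          intro u _
          ring
      _ = ∑ u : Fin p, (∑ t : Fin p, (C i t k * D t j k) * (A i u t * B u j t)) * X i j u := by
          rw [Finset.sum_comm]
          simp [Finset.sum_mul]
      _ = ∑ u : Fin p, (if k = u then 1 else 0) * X i j u := by
          simp only [h i j k]
      _ = X i j k := by simp
end

section
/- Let m n p : ℕ, let A : Fin m → Fin p → Fin p → ℂ and B : Fin p → Fin n → Fin p → ℂ, and suppose the pair (A, B) admits an outer inverse pair: there exist C : Fin m → Fin p → Fin p → ℂ and D : Fin p → Fin n → Fin p → ℂ with Prod(C, Prod(A, X, B), D) = X for every X : Fin m → Fin n → Fin p → ℂ. Then for every i : Fin m and j : Fin n, the p × p matrix F_{ij} : Matrix (Fin p) (Fin p) ℂ defined by F_{ij} t s = A i s t * B s j t is invertible, i.e. det F_{ij} ≠ 0. -/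
/-- if `(A, B)` admits an outer inverse pair, then each flattened `p × p`
matrix `F_{ij} t s = A i s t * B s j t` is invertible. -/
theorem bm_inverse_pair_flattening_invertible (m n p : ℕ)
    (A : Fin m → Fin p → Fin p → ℂ) (B : Fin p → Fin n → Fin p → ℂ)
    (h : ∃ (C : Fin m → Fin p → Fin p → ℂ) (D : Fin p → Fin n → Fin p → ℂ),
      ∀ X : Fin m → Fin n → Fin p → ℂ, bmProd C (bmProd A X B) D = X) :
    ∀ (i : Fin m) (j : Fin n),
      Matrix.det (Matrix.of fun t s : Fin p => A i s t * B s j t) ≠ 0 := by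
  obtain ⟨C, D, hCD⟩ := h
  intro i j
  set F : Matrix (Fin p) (Fin p) ℂ := Matrix.of fun t s => A i s t * B s j t with hF
  set G : Matrix (Fin p) (Fin p) ℂ := Matrix.of fun k t => C i t k * D t j k with hG
  have hGF : G * F = 1 := by
    ext k s
    have key := congrFun (congrFun (congrFun
      (hCD (fun _ _ t => if t = s then 1 else 0)) i) j) k
    simp only [bmProd] at key
    simp only [Matrix.mul_apply, hF, hG, Matrix.one_apply, Matrix.of_apply]
    rw [← key]
    apply Finset.sum_congr rfl
    intro t _
    rw [Finset.sum_eq_single s]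
    · simp; ring
    · intro u _ hu; simp [hu]
    · simp
  intro hdet
  have h1 : (1:ℂ) = 0 := by
    have h2 := congrArg Matrix.det hGF
    rw [Matrix.det_mul, hdet, mul_zero, Matrix.det_one] at h2
    exact h2.symm
  simp at h1
end

section
/- Let m n p : ℕ, let A, C : Fin m → Fin p → Fin p → ℂ and B, D : Fin p → Fin n → Fin p → ℂ, and suppose Prod(C, Prod(A, X, B), D) = X for every X : Fin m → Fin n → Fin p → ℂ. Then for every X : Fin m → Fin n → Fin p → ℂ one also has Prod(Prod(X^⊤, B^⊤, A^⊤), D^⊤, C^⊤) = X^⊤ and Prod(D^⊤², C^⊤², Prod(B^⊤², A^⊤², X^⊤²)) = X^⊤², where M^⊤² denotes (M^⊤)^⊤. -/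
/-- The transpose of a third order hypermatrix: cyclic permutation of the indices. -/
def hmT {m n p : ℕ} (A : Fin m → Fin n → Fin p → ℂ) :
    Fin n → Fin p → Fin m → ℂ :=
  fun i j k => A k i j

/-- the inverse pair property is preserved under transposition. -/
theorem bm_inverse_pair_transpose (m n p : ℕ)
    (A C : Fin m → Fin p → Fin p → ℂ) (B D : Fin p → Fin n → Fin p → ℂ)
    (h : ∀ X : Fin m → Fin n → Fin p → ℂ, bmProd C (bmProd A X B) D = X) :
    ∀ X : Fin m → Fin n → Fin p → ℂ,
      bmProd (bmProd (hmT X) (hmT B) (hmT A)) (hmT D) (hmT C) = hmT X ∧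
      bmProd (hmT (hmT D)) (hmT (hmT C))
        (bmProd (hmT (hmT B)) (hmT (hmT A)) (hmT (hmT X))) = hmT (hmT X) := by
  have key : ∀ {m n p ℓ : ℕ} (A : Fin m → Fin ℓ → Fin p → ℂ)
      (B : Fin m → Fin n → Fin ℓ → ℂ) (C : Fin ℓ → Fin n → Fin p → ℂ),
      hmT (bmProd A B C) = bmProd (hmT B) (hmT C) (hmT A) := by
    intro m n p ℓ A B C
    funext i j k
    simp only [hmT, bmProd]
    exact Finset.sum_congr rfl fun t _ => by ring
  intro X
  constructor
  · rw [← key, ← key, h X]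
  · rw [← key, ← key, ← key, ← key, h X]
end
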